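/- Let n, d, r be positive integers and C > 0. Let Ω ⊆ {1,…,n}×{1,…,n} be the edge set of a d-regular bipartite graph whose biadjacency matrix G satisfies G1 and G2 with constant C, and let M ∈ ℝ^{n×n} be a rank-r matrix whose thin SVD satisfies the μ₀-incoherence assumption A1. Then for every k ≥ r, ‖(n/d)·P_k(P_Ω(M)) − M‖ ≤ (2·C·μ₀·r/√d)·‖M‖, where P_k(A) denotes a best rank-k approximation of A in spectral norm (obtained by truncating the SVD of A to its top k singular values) and ‖·‖ is the spectral norm. -/

import Mathlib

/-!
Write `J` for the all-ones matrix and `H = G - (d/n) J`. Since `J ⊙ M = M`, the rescaled sample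
`(n/d) P_Ω(M) - M` equals `(n/d) (H ⊙ M)`.

By G1, `𝟙/√n` is a left and right top singular vector of `G` with singular value `d`, so `H` is
`G` deflated by this singular pair. Given `x` and `v`, the plane spanned by `𝟙` and the
component of `x` orthogonal to `𝟙` contains a unit vector orthogonal to `v` that `G` stretches at
least as much as `H` stretches `x`; by the Courant–Fischer definition of `σ₂`,
`‖H‖ ≤ σ₂(G) ≤ C√d`.

For `M = Σₚ sₚ uₚ vₚᵀ`, `xᵀ (H ⊙ M) y = Σₚ sₚ (x ∘ uₚ)ᵀ H (y ∘ vₚ)`, and Cauchy–Schwarz over `p`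
together with `Σₚ ‖x ∘ uₚ‖² = Σᵢ xᵢ² ‖Uⁱ‖² ≤ (μ₀ r / n) ‖x‖²` gives
`‖H ⊙ M‖ ≤ (μ₀ r / n) ‖M‖ ‖H‖`. So `(n/d) P_Ω(M)` is within `ε = C μ₀ r ‖M‖ / √d` of `M`.

Finally `(d/n) M` has rank `r ≤ k`, so the best rank-`k` approximation `B` of `P_Ω(M)` is at
least as close to `P_Ω(M)` as `(d/n) M`, and the triangle inequality gives `2ε`.
-/
open Matrix
open scoped BigOperators

noncomputable section

/-- Euclidean norm of a vector. -/
def vecNorm {β : Type*} [Fintype β] (x : β → ℝ) : ℝ :=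
  Real.sqrt (∑ i, x i ^ 2)

/-- Spectral norm (largest singular value) of a real matrix. -/
def specNorm {α β : Type*} [Fintype α] [Fintype β] (A : Matrix α β ℝ) : ℝ :=
  sSup {c | ∃ x : β → ℝ, vecNorm x ≤ 1 ∧ c = vecNorm (A.mulVec x)}

/-- Second largest singular value of a real matrix (Courant–Fischer characterization). -/
def sigma2 {α β : Type*} [Fintype α] [Fintype β] (A : Matrix α β ℝ) : ℝ :=
  ⨅ v : β → ℝ, sSup {c | ∃ x : β → ℝ,
    vecNorm x ≤ 1 ∧ (∑ i, v i * x i) = 0 ∧ c = vecNorm (A.mulVec x)}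

/-- Frobenius norm. -/
def frobNorm {α β : Type*} [Fintype α] [Fintype β] (A : Matrix α β ℝ) : ℝ :=
  Real.sqrt (∑ i, ∑ j, A i j ^ 2)

/-- Nuclear norm: the sum of the singular values, i.e. the trace of `√(AᵀA)`. -/
def nuclearNorm {α β : Type*} [Fintype α] [Fintype β] [DecidableEq β]
    (A : Matrix α β ℝ) : ℝ :=
  ((Matrix.posSemidef_conjTranspose_mul_self A).1.eigenvectorUnitary.1 *
    Matrix.diagonal ((Real.sqrt ·) ∘ (Matrix.posSemidef_conjTranspose_mul_self A).1.eigenvalues) *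
    (star (Matrix.posSemidef_conjTranspose_mul_self A).1.eigenvectorUnitary : Matrix β β ℝ)).trace

/-- The sampling operator `P_Ω`. -/
def sampl {n : ℕ} (Ω : Finset (Fin n × Fin n)) (M : Matrix (Fin n) (Fin n) ℝ) :
    Matrix (Fin n) (Fin n) ℝ :=
  Matrix.of fun i j => if (i, j) ∈ Ω then M i j else 0

/-- The biadjacency matrix `G` of the bipartite graph with edge set `Ω`. -/
def biadj {n : ℕ} (Ω : Finset (Fin n × Fin n)) : Matrix (Fin n) (Fin n) ℝ :=
  Matrix.of fun i j => if (i, j) ∈ Ω then (1 : ℝ) else 0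

/-- `Ω` is the edge set of a `d`-regular bipartite graph: every row and every column
of `G` has exactly `d` ones. -/
def RegularSampling {n : ℕ} (Ω : Finset (Fin n × Fin n)) (d : ℕ) : Prop :=
  (∀ i : Fin n, (Finset.univ.filter fun j => (i, j) ∈ Ω).card = d) ∧
  (∀ j : Fin n, (Finset.univ.filter fun i => (i, j) ∈ Ω).card = d)

/-- Assumption G1: the all-ones vector is a top left- and right-singular vector of `G`,
with `σ₁(G) = d`. -/
def AssumptionG1 {n : ℕ} (Ω : Finset (Fin n × Fin n)) (d : ℕ) : Prop :=
  specNorm (biadj Ω) = d ∧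
  (biadj Ω).mulVec (fun _ => 1) = (fun _ => (d : ℝ)) ∧
  Matrix.vecMul (fun _ => 1) (biadj Ω) = (fun _ => (d : ℝ))

/-- Assumption G2: `σ₂(G) ≤ C·√d`. -/
def AssumptionG2 {n : ℕ} (Ω : Finset (Fin n × Fin n)) (d : ℕ) (C : ℝ) : Prop :=
  sigma2 (biadj Ω) ≤ C * Real.sqrt d

/-- Assumption A1 (`μ₀`-incoherence) for one factor: every row `U^i` satisfies
`‖U^i‖² ≤ μ₀ r / n`. -/
def IncoherentRows {n r : ℕ} (U : Matrix (Fin n) (Fin r) ℝ) (μ₀ : ℝ) : Prop :=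
  ∀ i : Fin n, (∑ k, U i k ^ 2) ≤ μ₀ * r / n

/-- Assumption A2 (strong incoherence with parameter `δ`) for one factor:
for every `S` with `|S| = d`, `‖(n/d)·∑_{k∈S} U^k (U^k)ᵀ − I‖ ≤ δ`. -/
def StrongIncoherence {n r : ℕ} (U : Matrix (Fin n) (Fin r) ℝ) (d : ℕ) (δ : ℝ) : Prop :=
  ∀ S : Finset (Fin n), S.card = d →
    specNorm (((n : ℝ) / (d : ℝ)) • (∑ k ∈ S, Matrix.vecMulVec (U k) (U k)) - 1) ≤ δ

/-- `M = U · diagonal s · Vᵀ` is a thin SVD of the rank-`r` matrix `M`. -/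
def IsThinSVD {n r : ℕ} (M : Matrix (Fin n) (Fin n) ℝ)
    (U : Matrix (Fin n) (Fin r) ℝ) (s : Fin r → ℝ) (V : Matrix (Fin n) (Fin r) ℝ) : Prop :=
  Uᵀ * U = 1 ∧ Vᵀ * V = 1 ∧ (∀ i, 0 < s i) ∧ M = U * Matrix.diagonal s * Vᵀ

/-- The projection `P_T` onto the subspace `T` spanned by matrices `UXᵀ` and `YVᵀ`. -/
def projT {n r : ℕ} (U V : Matrix (Fin n) (Fin r) ℝ) (Z : Matrix (Fin n) (Fin n) ℝ) :
    Matrix (Fin n) (Fin n) ℝ :=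
  U * Uᵀ * Z + Z * (V * Vᵀ) - U * Uᵀ * Z * (V * Vᵀ)

/-- The projection `P_{T⊥}` onto the orthogonal complement of `T`. -/
def projTperp {n r : ℕ} (U V : Matrix (Fin n) (Fin r) ℝ) (Z : Matrix (Fin n) (Fin n) ℝ) :
    Matrix (Fin n) (Fin n) ℝ :=
  (1 - U * Uᵀ) * Z * (1 - V * Vᵀ)

end

open scoped Matrix.Norms.L2Operator RealInnerProductSpace
open WithLp

section EuclideanNorms

variable {m n : Type*} [Fintype m] [Fintype n]

theorem dotProduct_eq_inner (x y : n → ℝ) : x ⬝ᵥ y = ⟪toLp 2 x, toLp 2 y⟫ := by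
  rw [EuclideanSpace.inner_toLp_toLp, star_trivial, dotProduct_comm]

theorem norm_toLp_sq (x : n → ℝ) : ‖toLp 2 x‖ ^ 2 = x ⬝ᵥ x := by
  rw [dotProduct_eq_inner, real_inner_self_eq_norm_sq]

theorem vecNorm_eq_norm (x : n → ℝ) : vecNorm x = ‖toLp 2 x‖ := by
  simp [vecNorm, EuclideanSpace.norm_eq]

variable [DecidableEq n]

theorem specNorm_eq_l2_opNorm (A : Matrix m n ℝ) : specNorm A = ‖A‖ := by
  rw [specNorm, Matrix.l2_opNorm_def, ← ContinuousLinearMap.sSup_unitClosedBall_eq_norm]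
  congr 1
  ext c
  simp only [vecNorm_eq_norm, Set.mem_ofPred_eq, Set.mem_image, Metric.mem_closedBall,
    dist_zero_right]
  constructor
  · rintro ⟨x, hx, rfl⟩
    exact ⟨toLp 2 x, hx, rfl⟩
  · rintro ⟨x, hx, rfl⟩
    exact ⟨ofLp x, hx, rfl⟩

theorem abs_dotProduct_mulVec_le (A : Matrix m n ℝ) (x : m → ℝ) (y : n → ℝ) :
    |x ⬝ᵥ A *ᵥ y| ≤ ‖A‖ * ‖toLp 2 x‖ * ‖toLp 2 y‖ := by
  rw [dotProduct_eq_inner, mul_right_comm]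
  exact (abs_real_inner_le_norm _ _).trans <| by
    simpa [mul_comm ‖toLp 2 x‖] using
      mul_le_mul_of_nonneg_left (A.l2_opNorm_mulVec (toLp 2 y)) (norm_nonneg (toLp 2 x))

theorem l2_opNorm_le_of_abs_dotProduct_mulVec_le {A : Matrix m n ℝ} {K : ℝ} (hK : 0 ≤ K)
    (h : ∀ x y, |x ⬝ᵥ A *ᵥ y| ≤ K * ‖toLp 2 x‖ * ‖toLp 2 y‖) : ‖A‖ ≤ K := by
  rw [Matrix.l2_opNorm_def]
  refine ContinuousLinearMap.opNorm_le_bound _ hK fun y => ?_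
  have hy := h (A *ᵥ ofLp y) (ofLp y)
  rw [dotProduct_eq_inner, real_inner_self_eq_norm_sq, abs_of_nonneg (sq_nonneg _)] at hy
  change ‖toLp 2 (A *ᵥ ofLp y)‖ ≤ K * ‖y‖
  rcases (norm_nonneg (toLp 2 (A *ᵥ ofLp y))).eq_or_lt with h0 | hpos
  · rw [← h0]
    exact mul_nonneg hK (norm_nonneg y)
  · nlinarith

theorem l2_opNorm_le_sigma2 {H G : Matrix m n ℝ}
    (h : ∀ v x : EuclideanSpace ℝ n, ‖x‖ ≤ 1 → ∃ x', ‖x'‖ ≤ 1 ∧ ⟪v, x'⟫ = 0 ∧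
      ‖Matrix.toEuclideanLin H x‖ ≤ ‖Matrix.toEuclideanLin G x'‖) :
    ‖H‖ ≤ sigma2 G := by
  refine le_ciInf fun v => ?_
  have hbdd : BddAbove {c | ∃ x : n → ℝ,
      vecNorm x ≤ 1 ∧ ∑ i, v i * x i = 0 ∧ c = vecNorm (G *ᵥ x)} := by
    refine ⟨‖G‖, ?_⟩
    rintro _ ⟨x, hx, -, rfl⟩
    rw [vecNorm_eq_norm] at hx ⊢
    exact (G.l2_opNorm_mulVec _).trans (mul_le_of_le_one_right (norm_nonneg G) hx)
  rw [Matrix.l2_opNorm_def, ← ContinuousLinearMap.sSup_unitClosedBall_eq_norm]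
  refine csSup_le ((Metric.nonempty_closedBall.2 zero_le_one).image _) ?_
  rintro _ ⟨x, hx, rfl⟩
  obtain ⟨x', hx', hvx', hle⟩ := h (toLp 2 v) x (mem_closedBall_zero_iff.1 hx)
  refine hle.trans (le_csSup hbdd ⟨ofLp x', ?_, ?_, ?_⟩)
  · rwa [vecNorm_eq_norm]
  · rwa [← dotProduct_eq_inner] at hvx'
  · rw [vecNorm_eq_norm]
    rfl

end EuclideanNorms

section Deflation

theorem exists_sq_add_sq_eq_one_mul_add_mul_eq_zero (α β : ℝ) :
    ∃ a b : ℝ, a ^ 2 + b ^ 2 = 1 ∧ a * α + b * β = 0 := by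
  rcases eq_or_ne (α ^ 2 + β ^ 2) 0 with h | h
  · exact ⟨1, 0, by norm_num, by nlinarith [sq_nonneg α, sq_nonneg β]⟩
  · have hρ : √(α ^ 2 + β ^ 2) ^ 2 = α ^ 2 + β ^ 2 := Real.sq_sqrt (by positivity)
    have hρ0 : √(α ^ 2 + β ^ 2) ≠ 0 := by positivity
    refine ⟨β / √(α ^ 2 + β ^ 2), -α / √(α ^ 2 + β ^ 2), ?_, ?_⟩
    · field_simp
      linear_combination hρ.symm
    · field_simp
      ring

variable {E F : Type*} [NormedAddCommGroup E] [InnerProductSpace ℝ E]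

theorem norm_smul_add_smul_sq_of_inner_eq_zero {u y : E} (hu : ‖u‖ = 1) (huy : ⟪u, y⟫ = 0)
    (a b : ℝ) : ‖a • u + b • y‖ ^ 2 = a ^ 2 + b ^ 2 * ‖y‖ ^ 2 := by
  have h := norm_add_sq_eq_norm_sq_add_norm_sq_real (x := a • u) (y := b • y)
    (by simp [inner_smul_left, inner_smul_right, huy])
  simp only [norm_smul, hu, Real.norm_eq_abs] at h
  nlinarith [sq_abs a, sq_abs b]

variable [NormedAddCommGroup F] [InnerProductSpace ℝ F]

theorem exists_orthogonal_norm_apply_le_of_singular_pair (T : E →ₗ[ℝ] F) {u : E} {w : F}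
    {σ : ℝ} (hu : ‖u‖ = 1) (hw : ‖w‖ = 1) (hTu : T u = σ • w)
    (hTw : ∀ y, ⟪w, T y⟫ = σ * ⟪u, y⟫) (hT : ∀ y, ‖T y‖ ≤ σ * ‖y‖) (v : E) {x : E}
    (hx : ‖x‖ ≤ 1) :
    ∃ x', ‖x'‖ ≤ 1 ∧ ⟪v, x'⟫ = 0 ∧ ‖T x - (σ * ⟪u, x⟫) • w‖ ≤ ‖T x'‖ := by
  have hσ : 0 ≤ σ := by simpa [hu] using (norm_nonneg _).trans (hT u)
  set y := x - ⟪u, x⟫ • u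
  have huy : ⟪u, y⟫ = 0 := by simp [y, inner_sub_right, inner_smul_right, hu]
  have hTy : T y = T x - (σ * ⟪u, x⟫) • w := by simp [y, hTu, smul_smul, mul_comm]
  have hwTy : ⟪w, T y⟫ = 0 := by rw [hTw, huy, mul_zero]
  have hy : ‖y‖ ≤ 1 := by
    have hxy : x = ⟪u, x⟫ • u + (1 : ℝ) • y := by simp [y]
    have := norm_smul_add_smul_sq_of_inner_eq_zero hu huy ⟪u, x⟫ 1
    rw [← hxy] at this
    nlinarith [norm_nonneg x, norm_nonneg y, sq_nonneg ⟪u, x⟫]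
  have hTyσ : ‖T y‖ ≤ σ := (hT y).trans (mul_le_of_le_one_right hσ hy)
  obtain ⟨a, b, hab, hv⟩ := exists_sq_add_sq_eq_one_mul_add_mul_eq_zero ⟪v, u⟫ ⟪v, y⟫
  -- `T` maps the orthogonal pair `u, y` to the orthogonal pair `σ w, T y`, and `‖T y‖ ≤ σ`,
  -- so `‖T (a • u + b • y)‖ ≥ ‖T y‖` whenever `a² + b² = 1`.
  refine ⟨a • u + b • y, ?_, ?_, ?_⟩
  · have := norm_smul_add_smul_sq_of_inner_eq_zero hu huy a b
    rw [← sq_le_one_iff₀ (norm_nonneg _), this]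
    nlinarith [pow_le_one₀ (n := 2) (norm_nonneg y) hy, sq_nonneg b]
  · simpa [inner_add_right, inner_smul_right, mul_comm] using hv
  · have hTx' : T (a • u + b • y) = (a * σ) • w + b • T y := by simp [hTu, smul_smul]
    have := norm_smul_add_smul_sq_of_inner_eq_zero hw hwTy (a * σ) b
    rw [← hTy, ← sq_le_sq₀ (norm_nonneg _) (norm_nonneg _), hTx', this]
    nlinarith [pow_le_pow_left₀ (norm_nonneg _) hTyσ 2, sq_nonneg a]

end Deflation

section Ones

noncomputable def normalizedOnes (n : Type*) [Fintype n] : EuclideanSpace ℝ n :=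
  toLp 2 fun _ => (√(Fintype.card n : ℝ))⁻¹

variable {n : Type*} [Fintype n]

theorem ofLp_normalizedOnes :
    ofLp (normalizedOnes n) = (√(Fintype.card n : ℝ))⁻¹ • fun _ => (1 : ℝ) := by
  ext
  simp [normalizedOnes]

theorem norm_normalizedOnes [Nonempty n] : ‖normalizedOnes n‖ = 1 := by
  have hc : (0 : ℝ) < Fintype.card n := Nat.cast_pos.2 Fintype.card_pos
  rw [← pow_eq_one_iff_of_nonneg (norm_nonneg _) two_ne_zero, normalizedOnes, norm_toLp_sq]
  simp [dotProduct, ← sq, Real.sq_sqrt hc.le]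

variable [DecidableEq n]

theorem toEuclideanLin_smul_ones_apply (a : ℝ) (x : EuclideanSpace ℝ n) :
    Matrix.toEuclideanLin ((a / Fintype.card n) • of fun _ _ => (1 : ℝ)) x =
      (a * ⟪normalizedOnes n, x⟫) • normalizedOnes n := by
  have hc : (√(Fintype.card n : ℝ))⁻¹ * (√(Fintype.card n : ℝ))⁻¹ = (Fintype.card n : ℝ)⁻¹ := by
    rw [← mul_inv, Real.mul_self_sqrt (Nat.cast_nonneg _)]
  ext i
  simp only [normalizedOnes, Matrix.toLpLin_apply, PiLp.smul_apply,
    EuclideanSpace.inner_eq_star_dotProduct, mulVec, dotProduct, Matrix.smul_apply, of_apply,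
    smul_eq_mul, star_trivial, Finset.mul_sum, Finset.sum_mul]
  exact Finset.sum_congr rfl fun j _ => by linear_combination -(a * x j) * hc

theorem l2_opNorm_sub_smul_ones_le_sigma2 [Nonempty n] {G : Matrix n n ℝ} {d : ℝ}
    (hG : ‖G‖ = d) (hrow : G *ᵥ (fun _ => 1) = fun _ => d)
    (hcol : (fun _ => 1) ᵥ* G = fun _ => d) :
    ‖G - (d / Fintype.card n) • of (fun _ _ => (1 : ℝ))‖ ≤ sigma2 G := by
  set e := normalizedOnes n
  have hGe : G *ᵥ ofLp e = d • ofLp e := by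
    rw [ofLp_normalizedOnes, mulVec_smul, hrow]
    ext
    simp [mul_comm]
  have heG : ofLp e ᵥ* G = d • ofLp e := by
    rw [ofLp_normalizedOnes, smul_vecMul, hcol]
    ext
    simp [mul_comm]
  set T := Matrix.toEuclideanLin G
  have hTe : T e = d • e := by simp [T, Matrix.toLpLin_apply, hGe]
  have heT : ∀ y, ⟪e, T y⟫ = d * ⟪e, y⟫ := fun y => by
    rw [Matrix.toLpLin_apply, ← dotProduct_eq_inner, ← dotProduct_eq_inner, dotProduct_mulVec,
      heG, smul_dotProduct, smul_eq_mul]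
  have hT : ∀ y, ‖T y‖ ≤ d * ‖y‖ := hG ▸ G.l2_opNorm_mulVec
  refine l2_opNorm_le_sigma2 fun v x hx => ?_
  obtain ⟨x', hx'1, hvx', hle⟩ := exists_orthogonal_norm_apply_le_of_singular_pair T
    norm_normalizedOnes norm_normalizedOnes hTe heT hT v hx
  refine ⟨x', hx'1, hvx', le_of_eq_of_le ?_ hle⟩
  rw [map_sub, LinearMap.sub_apply, toEuclideanLin_smul_ones_apply]

end Ones

section Hadamard

variable {m n ι : Type*} [Fintype m] [Fintype n] [Fintype ι]

theorem sum_norm_sq_mul_col_le {c : ℝ} {U : Matrix m ι ℝ} (hU : ∀ i, ∑ p, U i p ^ 2 ≤ c)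
    (x : m → ℝ) : ∑ p, ‖toLp 2 (fun i => x i * U i p)‖ ^ 2 ≤ c * ‖toLp 2 x‖ ^ 2 := by
  simp only [EuclideanSpace.norm_sq_eq, Real.norm_eq_abs, sq_abs, mul_pow]
  rw [Finset.sum_comm, Finset.mul_sum]
  refine Finset.sum_le_sum fun i _ => ?_
  rw [← Finset.mul_sum, mul_comm]
  exact mul_le_mul_of_nonneg_right (hU i) (sq_nonneg _)

variable [DecidableEq ι]

omit [Fintype ι] in
theorem norm_toLp_col_eq_one {W : Matrix m ι ℝ} (hW : Wᵀ * W = 1) (p : ι) :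
    ‖toLp 2 (Wᵀ p)‖ = 1 := by
  rw [← pow_eq_one_iff_of_nonneg (norm_nonneg _) two_ne_zero, norm_toLp_sq,
    ← one_apply_eq (α := ℝ) p, ← hW]
  rfl

theorem dotProduct_hadamard_mulVec (H : Matrix m n ℝ) (U : Matrix m ι ℝ) (V : Matrix n ι ℝ)
    (s : ι → ℝ) (x : m → ℝ) (y : n → ℝ) :
    x ⬝ᵥ (H ⊙ (U * diagonal s * Vᵀ)) *ᵥ y =
      ∑ p, s p * ((fun i => x i * U i p) ⬝ᵥ H *ᵥ fun j => y j * V j p) := by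
  simp only [dotProduct, mulVec, hadamard_apply, mul_apply, transpose_apply, diagonal_apply,
    mul_ite, mul_zero, Finset.sum_ite_eq', Finset.mem_univ, if_true, Finset.mul_sum,
    Finset.sum_mul]
  symm
  rw [Finset.sum_comm]
  refine Finset.sum_congr rfl fun i _ => ?_
  rw [Finset.sum_comm]
  exact Finset.sum_congr rfl fun j _ => Finset.sum_congr rfl fun p _ => by ring

variable [DecidableEq n]

theorem l2_opNorm_hadamard_le {c σ : ℝ} (hc : 0 ≤ c) (hσ : 0 ≤ σ) (H : Matrix m n ℝ)
    {U : Matrix m ι ℝ} {V : Matrix n ι ℝ} {s : ι → ℝ} (hU : ∀ i, ∑ p, U i p ^ 2 ≤ c)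
    (hV : ∀ j, ∑ p, V j p ^ 2 ≤ c) (hs : ∀ p, |s p| ≤ σ) :
    ‖H ⊙ (U * diagonal s * Vᵀ)‖ ≤ c * σ * ‖H‖ := by
  refine l2_opNorm_le_of_abs_dotProduct_mulVec_le (by positivity) fun x y => ?_
  set a := fun p => ‖toLp 2 (fun i => x i * U i p)‖
  set b := fun p => ‖toLp 2 (fun j => y j * V j p)‖
  have hab : ∑ p, a p * b p ≤ c * ‖toLp 2 x‖ * ‖toLp 2 y‖ :=
    calc ∑ p, a p * b p ≤ √(∑ p, a p ^ 2) * √(∑ p, b p ^ 2) :=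
          Real.sum_mul_le_sqrt_mul_sqrt _ _ _
      _ ≤ √(c * ‖toLp 2 x‖ ^ 2) * √(c * ‖toLp 2 y‖ ^ 2) := by
        gcongr
        exacts [sum_norm_sq_mul_col_le hU x, sum_norm_sq_mul_col_le hV y]
      _ = √c * √c * ‖toLp 2 x‖ * ‖toLp 2 y‖ := by
        rw [Real.sqrt_mul hc, Real.sqrt_mul hc, Real.sqrt_sq (norm_nonneg _),
          Real.sqrt_sq (norm_nonneg _)]
        ring
      _ = c * ‖toLp 2 x‖ * ‖toLp 2 y‖ := by rw [Real.mul_self_sqrt hc]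
  calc |x ⬝ᵥ (H ⊙ (U * diagonal s * Vᵀ)) *ᵥ y|
      ≤ ∑ p, |s p| * |(fun i => x i * U i p) ⬝ᵥ H *ᵥ fun j => y j * V j p| := by
        rw [dotProduct_hadamard_mulVec]
        exact (Finset.abs_sum_le_sum_abs _ _).trans_eq (by simp only [abs_mul])
    _ ≤ ∑ p, σ * (‖H‖ * (a p * b p)) := by
        gcongr with p
        · exact hs p
        · simpa only [mul_assoc] using abs_dotProduct_mulVec_le H _ _
    _ ≤ c * σ * ‖H‖ * ‖toLp 2 x‖ * ‖toLp 2 y‖ := by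
        rw [← Finset.mul_sum, ← Finset.mul_sum]
        have := mul_le_mul_of_nonneg_left hab (mul_nonneg hσ (norm_nonneg H))
        linarith

theorem abs_le_l2_opNorm_of_eq_mul_diagonal_mul_transpose {M : Matrix m n ℝ}
    {U : Matrix m ι ℝ} {V : Matrix n ι ℝ} {s : ι → ℝ} (hU : Uᵀ * U = 1) (hV : Vᵀ * V = 1)
    (hM : M = U * diagonal s * Vᵀ) (p : ι) : |s p| ≤ ‖M‖ := by
  have hdiag : Uᵀ * M * V = diagonal s := by
    rw [hM, ← Matrix.mul_assoc, ← Matrix.mul_assoc, hU, Matrix.one_mul, Matrix.mul_assoc, hV,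
      Matrix.mul_one]
  calc |s p| = |Uᵀ p ⬝ᵥ M *ᵥ Vᵀ p| := by
        rw [← diagonal_apply_eq s p, ← hdiag, Matrix.mul_assoc, mul_apply']
        simp only [mul_apply, dotProduct, mulVec, transpose_apply]
    _ ≤ ‖M‖ := by
      simpa [norm_toLp_col_eq_one hU, norm_toLp_col_eq_one hV] using
        abs_dotProduct_mulVec_le M (Uᵀ p) (Vᵀ p)

end Hadamard

theorem sampl_eq_hadamard {n : ℕ} (Ω : Finset (Fin n × Fin n)) (M : Matrix (Fin n) (Fin n) ℝ) :
    sampl Ω M = biadj Ω ⊙ M := by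
  ext i j
  by_cases h : (i, j) ∈ Ω <;> simp [sampl, biadj, h]

theorem smul_hadamard_sub_self {m n : Type*} {a : ℝ} (ha : a ≠ 0) (G M : Matrix m n ℝ) :
    a • (G ⊙ M) - M = a • ((G - a⁻¹ • of fun _ _ => (1 : ℝ)) ⊙ M) := by
  ext i j
  simp only [Matrix.sub_apply, Matrix.smul_apply, hadamard_apply, of_apply, smul_eq_mul]
  field_simp

theorem norm_smul_sub_le_two_mul {E : Type*} [SeminormedAddCommGroup E] [NormedSpace ℝ E]
    {a : ℝ} (ha : a ≠ 0) {P B M : E} (h : ‖P - B‖ ≤ ‖P - a⁻¹ • M‖) :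
    ‖a • B - M‖ ≤ 2 * ‖a • P - M‖ := by
  have hP : ‖a • P - M‖ = |a| * ‖P - a⁻¹ • M‖ := by
    rw [← Real.norm_eq_abs, ← norm_smul, smul_sub, smul_inv_smul₀ ha]
  calc ‖a • B - M‖ = ‖a • (B - P) + (a • P - M)‖ := by
        rw [smul_sub]
        abel_nf
    _ ≤ |a| * ‖P - B‖ + ‖a • P - M‖ := by
        rw [norm_sub_rev P B, ← Real.norm_eq_abs, ← norm_smul]
        exact norm_add_le _ _
    _ ≤ |a| * ‖P - a⁻¹ • M‖ + ‖a • P - M‖ := by gcongr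
    _ = 2 * ‖a • P - M‖ := by rw [← hP]; ring

theorem norm_smul_sampl_sub_le {n d r : ℕ} (hn : 0 < n) (hd : 0 < d) {C μ₀ : ℝ}
    {Ω : Finset (Fin n × Fin n)} (hG1 : AssumptionG1 Ω d) (hG2 : AssumptionG2 Ω d C)
    {M : Matrix (Fin n) (Fin n) ℝ} {U V : Matrix (Fin n) (Fin r) ℝ} {s : Fin r → ℝ}
    (hSVD : IsThinSVD M U s V) (hA1U : IncoherentRows U μ₀) (hA1V : IncoherentRows V μ₀) :
    ‖((n : ℝ) / d) • sampl Ω M - M‖ ≤ C * μ₀ * r / √d * ‖M‖ := by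
  obtain ⟨hU, hV, -, hM⟩ := hSVD
  have : Nonempty (Fin n) := ⟨⟨0, hn⟩⟩
  have hd' : (0 : ℝ) < d := by positivity
  set H := biadj Ω - ((d : ℝ) / n) • of fun _ _ => (1 : ℝ)
  have hμ : 0 ≤ μ₀ * r / n := (Finset.sum_nonneg fun p _ => sq_nonneg _).trans (hA1U ⟨0, hn⟩)
  have hH : ‖H‖ ≤ C * √d := by
    have := l2_opNorm_sub_smul_ones_le_sigma2 ((specNorm_eq_l2_opNorm _).symm.trans hG1.1)
      hG1.2.1 hG1.2.2
    rw [Fintype.card_fin] at this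
    exact this.trans hG2
  have hHM : ‖H ⊙ M‖ ≤ μ₀ * r / n * ‖M‖ * ‖H‖ := by
    have := l2_opNorm_hadamard_le hμ (norm_nonneg M) H hA1U hA1V
      (abs_le_l2_opNorm_of_eq_mul_diagonal_mul_transpose hU hV hM)
    rwa [← hM] at this
  rw [sampl_eq_hadamard, smul_hadamard_sub_self (by positivity), inv_div, norm_smul,
    Real.norm_of_nonneg (by positivity)]
  calc (n : ℝ) / d * ‖H ⊙ M‖ ≤ n / d * (μ₀ * r / n * ‖M‖ * (C * √d)) := by
        gcongr
        exact hHM.trans (mul_le_mul_of_nonneg_left hH (by positivity))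
    _ = C * μ₀ * r / √d * ‖M‖ := by
        field_simp
        rw [Real.sq_sqrt hd'.le]
        ring

theorem stmt_1_general {n d r : ℕ} (hn : 0 < n) (hd : 0 < d) {C μ₀ : ℝ}
    (Ω : Finset (Fin n × Fin n))
    (hG1 : AssumptionG1 Ω d) (hG2 : AssumptionG2 Ω d C)
    (M : Matrix (Fin n) (Fin n) ℝ) (U V : Matrix (Fin n) (Fin r) ℝ) (s : Fin r → ℝ)
    (hSVD : IsThinSVD M U s V) (hrank : M.rank = r)
    (hA1U : IncoherentRows U μ₀) (hA1V : IncoherentRows V μ₀)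
    (k : ℕ) (hk : r ≤ k) (B : Matrix (Fin n) (Fin n) ℝ)
    (hBbest : ∀ X : Matrix (Fin n) (Fin n) ℝ, X.rank ≤ k →
      specNorm (sampl Ω M - B) ≤ specNorm (sampl Ω M - X)) :
    specNorm (((n : ℝ) / (d : ℝ)) • B - M) ≤
      2 * C * μ₀ * r / Real.sqrt d * specNorm M := by
  have hrank' : (((n : ℝ) / d)⁻¹ • M).rank ≤ k := by
    rw [rank_smul_of_mem_nonZeroDivisors _ (mem_nonZeroDivisors_of_ne_zero (by positivity)),
      hrank]
    exact hk
  have hbest := hBbest _ hrank'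
  simp only [specNorm_eq_l2_opNorm] at hbest ⊢
  calc ‖((n : ℝ) / d) • B - M‖ ≤ 2 * ‖((n : ℝ) / d) • sampl Ω M - M‖ :=
        norm_smul_sub_le_two_mul (by positivity) hbest
    _ ≤ 2 * (C * μ₀ * r / √d * ‖M‖) := by
        gcongr
        exact norm_smul_sampl_sub_le hn hd hG1 hG2 hSVD hA1U hA1V
    _ = 2 * C * μ₀ * r / √d * ‖M‖ := by ring

/-- best rank-`k` approximation of `P_Ω(M)` approximates `M`. -/
theorem stmt_1 {n d r : ℕ} (hn : 0 < n) (hd : 0 < d) (hr : 0 < r) {C μ₀ : ℝ} (hC : 0 < C)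
    (Ω : Finset (Fin n × Fin n)) (hreg : RegularSampling Ω d)
    (hG1 : AssumptionG1 Ω d) (hG2 : AssumptionG2 Ω d C)
    (M : Matrix (Fin n) (Fin n) ℝ) (U V : Matrix (Fin n) (Fin r) ℝ) (s : Fin r → ℝ)
    (hSVD : IsThinSVD M U s V) (hrank : M.rank = r)
    (hA1U : IncoherentRows U μ₀) (hA1V : IncoherentRows V μ₀)
    (k : ℕ) (hk : r ≤ k) (B : Matrix (Fin n) (Fin n) ℝ) (hBrank : B.rank ≤ k)
    (hBbest : ∀ X : Matrix (Fin n) (Fin n) ℝ, X.rank ≤ k →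
      specNorm (sampl Ω M - B) ≤ specNorm (sampl Ω M - X)) :
    specNorm (((n : ℝ) / (d : ℝ)) • B - M) ≤
      2 * C * μ₀ * r / Real.sqrt d * specNorm M :=
  stmt_1_general hn hd Ω hG1 hG2 M U V s hSVD hrank hA1U hA1V k hk B hBbest
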